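/- arXiv:2305.06623 — 5 statements merged into one kernel-verified Lean document; each statement's English description precedes it below -/
import Mathlib

section
/- The Carlitz q-Euler numbers ε_n, defined by ε_n = (1-q)^{-n} Σ_{k=0}^n (-1)^k C(n,k) (1+q)/(1+q^{k+1}), satisfy ε_0 = 1 and, for all n ≥ 1, the recursion Σ_{k=0}^n C(n,k) q^{k+1} ε_k + ε_n = 0. -/
/-! With the linear functional `L : Xʲ ↦ (1 + q) / (1 + q ^ (j + 1))` on polynomials, the explicit
formula says `ε_n = L(Bⁿ)` for `B = (1 - X) / (1 - q)`. The binomial theorem turns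
`∑ C(n,k) q^(k+1) ε_k` into `q · L(Bⁿ(qX))`, and since `(1 + q ^ (j + 1)) · L(Xʲ) = 1 + q`,
`q · L(p(qX)) + L(p) = (1 + q) · p(1)` for every polynomial `p`. For `p = Bⁿ` with `n ≥ 1` this
vanishes because `B(1) = 0`. -/

open Finset

noncomputable def q : RatFunc ℚ := RatFunc.X

/-- Carlitz's q-Euler numbers, via the explicit formula. -/
noncomputable def qEuler (n : ℕ) : RatFunc ℚ :=
  ((1 - q) ^ n)⁻¹ *
    ∑ k ∈ Finset.range (n + 1),
      (-1) ^ k * (n.choose k : RatFunc ℚ) * ((1 + q) / (1 + q ^ (k + 1)))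

open Polynomial

section

variable {R : Type*} [CommRing R]

theorem coeff_one_sub_X_pow (k j : ℕ) :
    ((1 - X : R[X]) ^ k).coeff j = (-1) ^ j * k.choose j := by
  have : (1 - X : R[X]) ^ k = ((1 + X) ^ k).comp (C (-1) * X) := by
    simp [sub_eq_add_neg]
  rw [this, comp_C_mul_X_coeff, coeff_one_add_X_pow, mul_comm]

noncomputable def umbral (f : ℕ → R) : R[X] →ₗ[R] R :=
  lsum fun j => LinearMap.mulRight R (f j)

theorem umbral_monomial (f : ℕ → R) (j : ℕ) (c : R) : umbral f (monomial j c) = c * f j := by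
  simp [umbral]

theorem umbral_C_mul (f : ℕ → R) (c : R) (p : R[X]) : umbral f (C c * p) = c * umbral f p := by
  rw [← smul_eq_C_mul, map_smul, smul_eq_mul]

theorem umbral_eq_sum_range (f : ℕ → R) {p : R[X]} {n : ℕ} (hp : p.natDegree ≤ n) :
    umbral f p = ∑ j ∈ range (n + 1), p.coeff j * f j :=
  sum_over_range' p (f := fun j c => c * f j) (fun _ => zero_mul _) _ (Nat.lt_succ_of_le hp)

theorem mul_umbral_comp_C_mul_X_add_umbral (f : ℕ → R) {a c : R}
    (hf : ∀ j, f j * (1 + a ^ (j + 1)) = c) (p : R[X]) :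
    a * umbral f (p.comp (C a * X)) + umbral f p = c * p.eval 1 := by
  induction p using Polynomial.induction_on' with
  | add p r hp hr =>
    simp only [add_comp, map_add, eval_add]
    linear_combination hp + hr
  | monomial j b =>
    have hcomp : (monomial j b).comp (C a * X) = monomial j (b * a ^ j) := by
      rw [← C_mul_X_pow_eq_monomial, mul_comp, C_comp, X_pow_comp, mul_pow, ← C_pow, ← mul_assoc,
        ← C_mul, C_mul_X_pow_eq_monomial]
    rw [hcomp, umbral_monomial, umbral_monomial, eval_monomial, one_pow, mul_one]
    linear_combination b * hf j

end

theorem one_sub_q_ne_zero : 1 - q ≠ 0 := by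
  have : 1 - q = algebraMap ℚ[X] (RatFunc ℚ) (-(X - C 1)) := by
    simp [q]
  rw [this]
  exact RatFunc.algebraMap_ne_zero (neg_ne_zero.mpr (X_sub_C_ne_zero 1))

theorem one_add_q_pow_ne_zero (j : ℕ) : 1 + q ^ (j + 1) ≠ 0 := by
  have : 1 + q ^ (j + 1) = algebraMap ℚ[X] (RatFunc ℚ) (X ^ (j + 1) + C 1) := by
    simp [q, add_comm]
  rw [this]
  exact RatFunc.algebraMap_ne_zero (X_pow_add_C_ne_zero j.succ_pos 1)

noncomputable def qEulerWeight (j : ℕ) : RatFunc ℚ := (1 + q) / (1 + q ^ (j + 1))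

noncomputable def qEulerBase : (RatFunc ℚ)[X] := C (1 - q)⁻¹ * (1 - X)

theorem qEulerWeight_mul_one_add_q_pow (j : ℕ) : qEulerWeight j * (1 + q ^ (j + 1)) = 1 + q :=
  div_mul_cancel₀ _ (one_add_q_pow_ne_zero j)

theorem eval_one_qEulerBase : qEulerBase.eval 1 = 0 := by
  simp [qEulerBase]

theorem qEulerBase_comp_C_mul_X : qEulerBase.comp (C q * X) = C q * qEulerBase + 1 := by
  have hinv : C (1 - q)⁻¹ * (1 - C q) = 1 := by
    rw [← C_1, ← C_sub, ← C_mul, inv_mul_cancel₀ one_sub_q_ne_zero]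
  simp only [qEulerBase, mul_comp, C_comp, sub_comp, one_comp, X_comp]
  linear_combination hinv

theorem qEuler_eq_umbral (k : ℕ) : qEuler k = umbral qEulerWeight (qEulerBase ^ k) := by
  have hpow : qEulerBase ^ k = C ((1 - q) ^ k)⁻¹ * (1 - X) ^ k := by
    rw [qEulerBase, mul_pow, ← C_pow, inv_pow]
  have hdeg : (qEulerBase ^ k).natDegree ≤ k := by
    rw [hpow]
    compute_degree
  rw [umbral_eq_sum_range _ hdeg, qEuler, mul_sum]
  refine sum_congr rfl fun j _ => ?_
  rw [hpow, coeff_C_mul, coeff_one_sub_X_pow, qEulerWeight]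
  ring

theorem sum_choose_mul_q_pow_mul_qEuler (n : ℕ) :
    ∑ k ∈ range (n + 1), (n.choose k : RatFunc ℚ) * q ^ (k + 1) * qEuler k
      = q * umbral qEulerWeight ((qEulerBase ^ n).comp (C q * X)) := by
  calc ∑ k ∈ range (n + 1), (n.choose k : RatFunc ℚ) * q ^ (k + 1) * qEuler k
      = q * ∑ k ∈ range (n + 1), umbral qEulerWeight (C (q ^ k * n.choose k) * qEulerBase ^ k) := by
        rw [mul_sum]
        refine sum_congr rfl fun k _ => ?_
        rw [umbral_C_mul, qEuler_eq_umbral]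
        ring
    _ = q * umbral qEulerWeight ((C q * qEulerBase + 1) ^ n) := by
        rw [← map_sum, add_pow]
        congr 2
        refine sum_congr rfl fun k _ => ?_
        simp only [C_mul, C_pow, one_pow, mul_one, mul_pow, map_natCast]
        ring
    _ = q * umbral qEulerWeight ((qEulerBase ^ n).comp (C q * X)) := by
        rw [pow_comp, qEulerBase_comp_C_mul_X]

theorem qEuler_rec :
    qEuler 0 = 1 ∧
      ∀ n : ℕ, 1 ≤ n →
        (∑ k ∈ Finset.range (n + 1),
            (n.choose k : RatFunc ℚ) * q ^ (k + 1) * qEuler k) + qEuler n = 0 := by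
  refine ⟨?_, fun n hn => ?_⟩
  · have h : 1 + q ≠ 0 := by simpa using one_add_q_pow_ne_zero 0
    simp [qEuler, div_self h]
  · rw [sum_choose_mul_q_pow_mul_qEuler, qEuler_eq_umbral,
      mul_umbral_comp_C_mul_X_add_umbral _ qEulerWeight_mul_one_add_q_pow, eval_pow,
      eval_one_qEulerBase, zero_pow (by omega), mul_zero]
end

section
/- As q → 1, the Carlitz q-Euler number ε_n tends to E_n(0), the value of the n-th Euler polynomial at 0, where the Euler polynomials are defined by the generating function 2e^{xt}/(e^t+1) = Σ_{n≥0} E_n(x) t^n/n!. -/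
/-!
For `q ≠ ±1` Carlitz's numbers satisfy the umbral recurrence
`q (q ε + 1)^n + ε_n = (1 + q) [n = 0]`: writing `ε_k` as `(1 - q)^{-k}` times an alternating
binomial sum and resumming, the binomial theorem with `1 + q / (1 - q) = (1 - q)⁻¹` absorbs the
factors `(1 - q)^{-k}`. At `q = 1` it becomes `∑ C(n,k) E_k + E_n = 2 [n = 0]`, the coefficientwise
form of `(∑ E_n tⁿ/n!)(eᵗ + 1) = 2`. Both recurrences determine the top term through the
coefficient `1 + q^{n+1}`, which stays away from `0` near `q = 1`, so the limit passes through by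
strong induction.
-/

open Finset Filter Topology

/-- Carlitz's q-Euler numbers, as a function of a real parameter `q`. -/
noncomputable def qEulerReal (q : ℝ) (n : ℕ) : ℝ :=
  ((1 - q) ^ n)⁻¹ *
    ∑ k ∈ Finset.range (n + 1),
      (-1) ^ k * (n.choose k : ℝ) * ((1 + q) / (1 + q ^ (k + 1)))

theorem sum_choose_mul_pow_mul_sum_choose {R : Type*} [CommSemiring R] (x : R) (f : ℕ → R)
    (n : ℕ) :
    ∑ k ∈ range (n + 1), (n.choose k : R) * x ^ k *
        ∑ j ∈ range (k + 1), (k.choose j : R) * f j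
      = ∑ j ∈ range (n + 1), (n.choose j : R) * x ^ j * (1 + x) ^ (n - j) * f j := by
  simp_rw [mul_sum, range_eq_Ico, ← sum_Ico_Ico_comm]
  refine sum_congr rfl fun j hj => ?_
  have hjn : j ≤ n := Nat.lt_succ_iff.mp (mem_Ico.mp hj).2
  rw [sum_Ico_eq_sum_range, show n + 1 - j = n - j + 1 by omega, add_comm 1 x, add_pow,
    mul_sum, sum_mul]
  refine sum_congr rfl fun m _ => ?_
  have hchoose : (n.choose (j + m) : R) * ((j + m).choose j : R)
      = (n.choose j : R) * ((n - j).choose m : R) := by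
    rw [← Nat.cast_mul, ← Nat.cast_mul, Nat.choose_mul (Nat.le_add_right j m),
      Nat.add_sub_cancel_left]
  calc (n.choose (j + m) : R) * x ^ (j + m) * (((j + m).choose j : R) * f j)
      = (n.choose (j + m) : R) * ((j + m).choose j : R) * (x ^ (j + m) * f j) := by ring
    _ = _ := by rw [hchoose, one_pow, mul_one, pow_add]; ring

theorem alternating_sum_range_choose {R : Type*} [Ring R] (n : ℕ) :
    ∑ j ∈ range (n + 1), (-1 : R) ^ j * (n.choose j : R) = if n = 0 then 1 else 0 := by
  exact_mod_cast congrArg (Int.cast : ℤ → R) Int.alternating_sum_range_choose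

theorem one_add_pow_ne_zero {R : Type*} [Ring R] [LinearOrder R] [IsStrictOrderedRing R] {q : R}
    (hq : q ≠ -1) (k : ℕ) : 1 + q ^ k ≠ 0 := fun h =>
  hq (pow_eq_neg_one_iff.mp (eq_neg_of_add_eq_zero_right h)).1

theorem qEulerReal_recurrence {q : ℝ} (hq₁ : q ≠ 1) (hq_neg : q ≠ -1) (n : ℕ) :
    q * ∑ k ∈ range (n + 1), (n.choose k : ℝ) * q ^ k * qEulerReal q k + qEulerReal q n
      = if n = 0 then 1 + q else 0 := by
  set a : ℕ → ℝ := fun j => (-1) ^ j * ((1 + q) / (1 + q ^ (j + 1))) with ha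
  have hq : 1 - q ≠ 0 := sub_ne_zero.mpr hq₁.symm
  have hgeom : 1 + q / (1 - q) = (1 - q)⁻¹ := by field_simp; ring
  have hqEuler (k : ℕ) :
      qEulerReal q k = ((1 - q) ^ k)⁻¹ * ∑ j ∈ range (k + 1), (k.choose j : ℝ) * a j := by
    unfold qEulerReal
    congr 1
    exact sum_congr rfl fun j _ => by ring
  have hsum : ∑ k ∈ range (n + 1), (n.choose k : ℝ) * q ^ k * qEulerReal q k
      = ((1 - q) ^ n)⁻¹ * ∑ j ∈ range (n + 1), (n.choose j : ℝ) * q ^ j * a j := by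
    calc _ = ∑ k ∈ range (n + 1), (n.choose k : ℝ) * (q / (1 - q)) ^ k *
          ∑ j ∈ range (k + 1), (k.choose j : ℝ) * a j := by
          refine sum_congr rfl fun k _ => ?_
          rw [hqEuler, div_pow]; ring
      _ = ∑ j ∈ range (n + 1),
            (n.choose j : ℝ) * (q / (1 - q)) ^ j * (1 + q / (1 - q)) ^ (n - j) * a j :=
          sum_choose_mul_pow_mul_sum_choose _ _ _
      _ = _ := by
          rw [mul_sum]
          refine sum_congr rfl fun j hj => ?_
          have hjn : j ≤ n := Nat.lt_succ_iff.mp (mem_range.mp hj)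
          rw [hgeom, ← pow_mul_pow_sub (1 - q) hjn, div_pow, inv_pow, mul_inv]
          ring
  have hsummand (j : ℕ) : (q ^ (j + 1) + 1) * a j = (1 + q) * (-1) ^ j := by
    have := one_add_pow_ne_zero hq_neg (j + 1)
    rw [ha]; field_simp; ring
  calc _ = ((1 - q) ^ n)⁻¹ *
        ∑ j ∈ range (n + 1), (n.choose j : ℝ) * ((q ^ (j + 1) + 1) * a j) := by
        rw [hsum, hqEuler, mul_left_comm, ← mul_add, mul_sum, ← sum_add_distrib]
        congr 1; exact sum_congr rfl fun j _ => by ring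
    _ = ((1 - q) ^ n)⁻¹ * (1 + q) *
        ∑ j ∈ range (n + 1), (-1 : ℝ) ^ j * (n.choose j : ℝ) := by
        simp_rw [hsummand, mul_sum, mul_assoc]
        exact sum_congr rfl fun j _ => by ring
    _ = _ := by
        rw [alternating_sum_range_choose]
        split_ifs with hn <;> simp [hn]

namespace PowerSeries

theorem coeff_mk_div_factorial_mul_exp {K : Type*} [Field K] [CharZero K] (a : ℕ → K)
    (n : ℕ) :
    coeff n (mk (fun k => a k / k.factorial) * exp K)
      = (∑ k ∈ range (n + 1), (n.choose k : K) * a k) / n.factorial := by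
  rw [coeff_mul, Nat.sum_antidiagonal_eq_sum_range_succ_mk, sum_div]
  refine sum_congr rfl fun k hk => ?_
  have hkn : k ≤ n := Nat.lt_succ_iff.mp (mem_range.mp hk)
  have hfac : (n.factorial : K) ≠ 0 := Nat.cast_ne_zero.mpr n.factorial_ne_zero
  rw [coeff_mk, coeff_exp, Nat.cast_choose K hkn]
  simp only [map_div₀, map_one, map_natCast]
  field_simp

theorem sum_choose_mul_add_eq_of_mk_mul_exp_add_one_eq_two {K : Type*} [Field K] [CharZero K]
    {a : ℕ → K} (ha : mk (fun k => a k / k.factorial) * (exp K + 1) = 2) (n : ℕ) :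
    ∑ k ∈ range (n + 1), (n.choose k : K) * a k + a n = if n = 0 then 2 else 0 := by
  have hcoeff := congrArg (coeff n) ha
  rw [mul_add, mul_one, map_add, coeff_mk_div_factorial_mul_exp, coeff_mk,
    ← map_ofNat (C (R := K)) 2, coeff_C] at hcoeff
  have hfac : (n.factorial : K) ≠ 0 := Nat.cast_ne_zero.mpr n.factorial_ne_zero
  rw [← add_div, div_eq_iff hfac] at hcoeff
  rw [hcoeff]
  split_ifs with hn <;> simp [hn]

end PowerSeries

theorem tendsto_qEulerReal_of_forall_lt {E : ℕ → ℝ} {n : ℕ}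
    (hE : ∑ k ∈ range (n + 1), (n.choose k : ℝ) * E k + E n = if n = 0 then 2 else 0)
    (hlt : ∀ k < n, Tendsto (fun q => qEulerReal q k) (𝓝[≠] 1) (𝓝 (E k))) :
    Tendsto (fun q => qEulerReal q n) (𝓝[≠] 1) (𝓝 (E n)) := by
  have hq : Tendsto (fun q : ℝ => q) (𝓝[≠] 1) (𝓝 1) :=
    tendsto_nhdsWithin_of_tendsto_nhds tendsto_id
  have hsolved : (fun q => ((if n = 0 then 1 + q else 0)
        - q * ∑ k ∈ range n, (n.choose k : ℝ) * q ^ k * qEulerReal q k) / (1 + q ^ (n + 1)))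
      =ᶠ[𝓝[≠] 1] fun q => qEulerReal q n := by
    filter_upwards [nhdsWithin_le_nhds (isOpen_ne.mem_nhds (by norm_num : (1 : ℝ) ≠ -1)),
      self_mem_nhdsWithin] with q hq_neg hq₁
    have hrec := qEulerReal_recurrence hq₁ hq_neg n
    rw [sum_range_succ, Nat.choose_self, Nat.cast_one] at hrec
    rw [div_eq_iff (one_add_pow_ne_zero hq_neg (n + 1))]
    linear_combination -hrec
  have hconst : Tendsto (fun q : ℝ => if n = 0 then 1 + q else 0) (𝓝[≠] 1)
      (𝓝 (if n = 0 then 2 else 0)) := by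
    split_ifs
    · simpa [one_add_one_eq_two] using (tendsto_const_nhds (x := (1 : ℝ))).add hq
    · exact tendsto_const_nhds
  have hsum := tendsto_finsetSum (range n) fun k hk =>
    ((tendsto_const_nhds (x := (n.choose k : ℝ))).mul (hq.pow k)).mul (hlt k (mem_range.mp hk))
  have hlim := ((hconst.sub (hq.mul hsum)).div
    ((tendsto_const_nhds (x := (1 : ℝ))).add (hq.pow (n + 1))) (by norm_num)).congr' hsolved
  convert hlim using 2
  rw [sum_range_succ, Nat.choose_self, Nat.cast_one, one_mul] at hE
  simp only [one_pow, one_mul, mul_one]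
  linear_combination hE / 2

/-- As `q → 1`, the Carlitz q-Euler number `ε_n` tends to `E_n(0)`, where the Euler
polynomials have exponential generating function `2 e^{xt}/(e^t + 1)`; at `x = 0` this
means `(∑_{n≥0} E_n(0) t^n/n!) (e^t + 1) = 2`. -/
theorem qEuler_tendsto_eulerPoly_at_zero (E : ℕ → ℝ)
    (hE : (PowerSeries.mk fun n => E n / n.factorial) * (PowerSeries.exp ℝ + 1) = 2) :
    ∀ n : ℕ, Tendsto (fun q : ℝ => qEulerReal q n) (𝓝[≠] 1) (𝓝 (E n)) := by
  intro n
  induction n using Nat.strong_induction_on with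
  | _ n ih =>
    exact tendsto_qEulerReal_of_forall_lt
      (PowerSeries.sum_choose_mul_add_eq_of_mk_mul_exp_add_one_eq_two hE n) ih
end

section
/- For integers 0 ≤ m ≤ n, the generalized q-binomial polynomial satisfies the expansion [m,z choose n]_q = q^{-n(n-m)} Σ_{k=0}^{n-m} (-1)^{n-m-k} q^{binom(n-m-k,2)} [n-m choose n-m-k]_q [m+k,z choose m+k]_q, where [m,z choose n]_q := (1/[n]_q!) Π_{k=m-n+1}^{m} ([k]_q + q^k z). -/
/-!
Splitting off the top and the bottom linear factor of `[m + 1, z choose n + 1]_q` and using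
`[m + 1]_q = [n + 1]_q + q^(n+1) [m - n]_q` gives the q-Pascal rule
`[m + 1, z choose n + 1]_q = q^(n+1) [m, z choose n + 1]_q + [m, z choose n]_q`.
Solved for `[m, z choose n + 1]_q`, it expresses that polynomial through two with smaller `n - m`,
so induction on `n - m` reduces the expansion to the q-Pascal rule for Gaussian binomials,
`[d + 1 choose k + 1]_q = [d choose k]_q + q^(k+1) [d choose k + 1]_q`.
-/

open Finset Polynomial

/-- q-integer `[k]_q = (1-q^k)/(1-q)` for `k : ℤ`. -/
noncomputable def qint (k : ℤ) : RatFunc ℚ := (1 - q ^ k) / (1 - q)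

/-- q-factorial `[n]_q!`. -/
noncomputable def qfact (n : ℕ) : RatFunc ℚ := ∏ m ∈ Finset.range n, qint (m + 1)

/-- q-Pochhammer `(A;Q)_n`. -/
noncomputable def qPoch (Q A : RatFunc ℚ) (n : ℕ) : RatFunc ℚ :=
  ∏ j ∈ Finset.range n, (1 - A * Q ^ j)

/-- The generalized q-binomial polynomial `[m, z choose n]_q`. -/
noncomputable def qbinomPoly (m n : ℕ) : Polynomial (RatFunc ℚ) :=
  Polynomial.C (qfact n)⁻¹ *
    ∏ k ∈ Finset.Icc ((m : ℤ) - n + 1) (m : ℤ),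
      (Polynomial.C (qint k) + Polynomial.C (q ^ k) * Polynomial.X)

/-- Gaussian binomial coefficient `[M choose N]_q`. -/
noncomputable def qchoose (M N : ℕ) : RatFunc ℚ :=
  if N ≤ M then qfact M / (qfact N * qfact (M - N)) else 0

lemma q_ne_zero : q ≠ 0 := RatFunc.X_ne_zero

lemma one_sub_q_pow_ne_zero {n : ℕ} (hn : n ≠ 0) : (1 : RatFunc ℚ) - q ^ n ≠ 0 := by
  have h : (1 : RatFunc ℚ) - q ^ n = algebraMap ℚ[X] (RatFunc ℚ) (-(X ^ n - C 1)) := by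
    simp [q, RatFunc.algebraMap_X]
  rw [h, map_ne_zero_iff _ (RatFunc.algebraMap_injective ℚ), neg_ne_zero]
  exact X_pow_sub_C_ne_zero (Nat.pos_of_ne_zero hn) 1

lemma qint_add (a b : ℤ) : qint (a + b) = qint a + q ^ a * qint b := by
  simp only [qint, zpow_add₀ q_ne_zero]
  ring

lemma qint_natCast_ne_zero {n : ℕ} (hn : n ≠ 0) : qint n ≠ 0 := by
  rw [qint, zpow_natCast]
  exact div_ne_zero (one_sub_q_pow_ne_zero hn) (by simpa using one_sub_q_pow_ne_zero one_ne_zero)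

lemma qfact_succ (n : ℕ) : qfact (n + 1) = qfact n * qint (n + 1) :=
  prod_range_succ _ n

lemma qfact_ne_zero (n : ℕ) : qfact n ≠ 0 :=
  prod_ne_zero_iff.2 fun i _ => by exact_mod_cast qint_natCast_ne_zero i.succ_ne_zero

lemma qfact_zero : qfact 0 = 1 := prod_range_zero _

lemma qchoose_zero (M : ℕ) : qchoose M 0 = 1 := by
  rw [qchoose, if_pos M.zero_le, Nat.sub_zero, qfact_zero, one_mul, div_self (qfact_ne_zero M)]

lemma qchoose_self (M : ℕ) : qchoose M M = 1 := by
  rw [qchoose, if_pos le_rfl, Nat.sub_self, qfact_zero, mul_one, div_self (qfact_ne_zero M)]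

lemma qchoose_of_lt {M N : ℕ} (h : M < N) : qchoose M N = 0 :=
  if_neg (Nat.not_le.2 h)

lemma qchoose_mul_qfact_mul_qfact {M N : ℕ} (h : N ≤ M) :
    qchoose M N * qfact N * qfact (M - N) = qfact M := by
  rw [qchoose, if_pos h, mul_assoc,
    div_mul_cancel₀ _ (mul_ne_zero (qfact_ne_zero _) (qfact_ne_zero _))]

lemma qchoose_sub {M N : ℕ} (h : N ≤ M) : qchoose M (M - N) = qchoose M N := by
  rw [qchoose, qchoose, if_pos (M.sub_le N), if_pos h, Nat.sub_sub_self h, mul_comm]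

lemma qchoose_succ_succ (M N : ℕ) :
    qchoose (M + 1) (N + 1) = qchoose M N + q ^ (N + 1) * qchoose M (N + 1) := by
  rcases lt_trichotomy N M with hlt | rfl | hgt
  · obtain ⟨e, rfl⟩ : ∃ e, M = N + 1 + e := ⟨M - (N + 1), by omega⟩
    have hM := qchoose_mul_qfact_mul_qfact (show N + 1 ≤ N + 1 + e + 1 by omega)
    have hN := qchoose_mul_qfact_mul_qfact (show N ≤ N + 1 + e by omega)
    have hN1 := qchoose_mul_qfact_mul_qfact (show N + 1 ≤ N + 1 + e by omega)
    simp only [show N + 1 + e + 1 - (N + 1) = e + 1 by omega, show N + 1 + e - N = e + 1 by omega,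
      show N + 1 + e - (N + 1) = e by omega] at hM hN hN1
    have hsum :
        qint ((N : ℤ) + 1 + e + 1) =
          qint ((N : ℤ) + 1) + q ^ (N + 1) * qint ((e : ℤ) + 1) := by
      rw [show (N : ℤ) + 1 + e + 1 = (N + 1) + (e + 1) by ring, qint_add, ← Nat.cast_succ N,
        zpow_natCast]
    apply mul_right_cancel₀ (mul_ne_zero (qfact_ne_zero (N + 1)) (qfact_ne_zero (e + 1)))
    rw [← mul_assoc, hM]
    simp only [qfact_succ] at hN hN1 ⊢
    push_cast at hN hN1 ⊢
    linear_combination qfact (N + 1 + e) * hsum - qint ((N : ℤ) + 1) * hN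
      - q ^ (N + 1) * qint ((e : ℤ) + 1) * hN1
  · rw [qchoose_of_lt (Nat.lt_succ_self N), mul_zero, add_zero, qchoose_self, qchoose_self]
  · rw [qchoose_of_lt hgt, qchoose_of_lt (by omega), qchoose_of_lt (by omega), mul_zero,
      add_zero]

noncomputable def expansionCoeff (d k : ℕ) : RatFunc ℚ :=
  (-1) ^ (d - k) * q ^ ((d - k).choose 2) * qchoose d k

lemma expansionCoeff_of_lt {d k : ℕ} (h : d < k) : expansionCoeff d k = 0 := by
  rw [expansionCoeff, qchoose_of_lt h, mul_zero]

lemma expansionCoeff_succ_zero (d : ℕ) :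
    expansionCoeff (d + 1) 0 = -(q ^ d * expansionCoeff d 0) := by
  simp only [expansionCoeff, qchoose_zero, Nat.sub_zero, Nat.choose_succ_succ',
    Nat.choose_one_right]
  ring

lemma expansionCoeff_succ_succ (d k : ℕ) :
    expansionCoeff (d + 1) (k + 1) = expansionCoeff d k - q ^ d * expansionCoeff d (k + 1) := by
  rcases lt_or_ge d k with hlt | hle
  · simp only [expansionCoeff_of_lt hlt, expansionCoeff_of_lt (by omega : d + 1 < k + 1),
      expansionCoeff_of_lt (by omega : d < k + 1), mul_zero, sub_zero]
  obtain ⟨s, rfl⟩ := Nat.exists_eq_add_of_le hle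
  rw [expansionCoeff, expansionCoeff, expansionCoeff, qchoose_succ_succ]
  cases s with
  | zero => simp [qchoose_of_lt]
  | succ s =>
    rw [show k + (s + 1) + 1 - (k + 1) = s + 1 by omega, show k + (s + 1) - k = s + 1 by omega,
      show k + (s + 1) - (k + 1) = s by omega, Nat.choose_succ_succ', Nat.choose_one_right]
    ring

lemma qbinomPoly_succ_succ (m n : ℕ) :
    qbinomPoly (m + 1) (n + 1) = C (q ^ (n + 1)) * qbinomPoly m (n + 1) + qbinomPoly m n := by
  set L : ℤ → (RatFunc ℚ)[X] := fun k => C (qint k) + C (q ^ k) * X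
  set R := ∏ k ∈ Icc ((m : ℤ) - n + 1) m, L k
  have htop : ∏ k ∈ Icc (((m + 1 : ℕ) : ℤ) - (n + 1 : ℕ) + 1) (m + 1 : ℕ), L k =
      L (m + 1) * R := by
    rw [show Icc (((m + 1 : ℕ) : ℤ) - (n + 1 : ℕ) + 1) (m + 1 : ℕ) =
        insert ((m : ℤ) + 1) (Icc ((m : ℤ) - n + 1) m) by
      ext; simp only [mem_Icc, mem_insert]; omega]
    exact prod_insert (by simp)
  have hbot : ∏ k ∈ Icc ((m : ℤ) - (n + 1 : ℕ) + 1) m, L k = L (m - n) * R := by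
    rw [show Icc ((m : ℤ) - (n + 1 : ℕ) + 1) m =
        insert ((m : ℤ) - n) (Icc ((m : ℤ) - n + 1) m) by
      ext; simp only [mem_Icc, mem_insert]; omega]
    exact prod_insert (by simp)
  have hL : L (m + 1) = C (q ^ (n + 1)) * L (m - n) + C (qint (n + 1)) := by
    simp only [L]
    rw [show (m : ℤ) + 1 = (n + 1) + (m - n) by ring, qint_add,
      zpow_add₀ q_ne_zero ((n : ℤ) + 1), ← Nat.cast_succ n, zpow_natCast]
    simp only [map_add, map_mul]
    ring
  have hinv : C (qint (n + 1))⁻¹ * C (qint (n + 1)) = (1 : (RatFunc ℚ)[X]) := by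
    rw [← map_mul, inv_mul_cancel₀ (by exact_mod_cast qint_natCast_ne_zero n.succ_ne_zero),
      map_one]
  simp only [qbinomPoly]
  rw [htop, hbot, hL, qfact_succ, mul_inv, map_mul]
  linear_combination C (qfact n)⁻¹ * R * hinv

theorem qpow_mul_qbinomPoly_eq_sum (d m : ℕ) :
    C (q ^ ((m + d) * d)) * qbinomPoly m (m + d) =
      ∑ k ∈ range (d + 1), C (expansionCoeff d k) * qbinomPoly (m + k) (m + k) := by
  induction d generalizing m with
  | zero => simp [expansionCoeff, qchoose_zero]
  | succ d ih =>
    set P : ℕ → (RatFunc ℚ)[X] := fun k => qbinomPoly (m + k) (m + k)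
    have hshift : ∑ k ∈ range (d + 1), C (expansionCoeff d (k + 1)) * P (k + 1)
        + C (expansionCoeff d 0) * P 0 = ∑ k ∈ range (d + 1), C (expansionCoeff d k) * P k := by
      rw [← sum_range_succ' (fun k => C (expansionCoeff d k) * P k), sum_range_succ,
        expansionCoeff_of_lt d.lt_succ_self, map_zero, zero_mul, add_zero]
    have hup :
        ∑ k ∈ range (d + 1), C (expansionCoeff d k) * qbinomPoly (m + 1 + k) (m + 1 + k) =
        ∑ k ∈ range (d + 1), C (expansionCoeff d k) * P (k + 1) := by
      refine sum_congr rfl fun k _ => ?_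
      rw [show m + 1 + k = m + (k + 1) by omega]
    have hpascal := qbinomPoly_succ_succ m (m + d)
    calc C (q ^ ((m + (d + 1)) * (d + 1))) * qbinomPoly m (m + (d + 1))
        = C (q ^ ((m + 1 + d) * d)) * qbinomPoly (m + 1) (m + 1 + d)
            - C (q ^ d) * (C (q ^ ((m + d) * d)) * qbinomPoly m (m + d)) := by
          rw [show m + 1 + d = m + d + 1 by omega, hpascal, ← add_assoc,
            show (m + d + 1) * (d + 1) = (m + d + 1) * d + (m + d + 1) by ring,
            show (m + d + 1) * d = d + (m + d) * d by ring, pow_add, pow_add, map_mul, map_mul]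
          ring
      _ = ∑ k ∈ range (d + 1 + 1), C (expansionCoeff (d + 1) k) * P k := by
          rw [ih, ih, hup, ← hshift, sum_range_succ' _ (d + 1), mul_add, mul_sum]
          simp only [expansionCoeff_succ_succ, expansionCoeff_succ_zero, map_sub, map_mul, map_neg,
            sub_mul, sum_sub_distrib, mul_assoc]
          ring

theorem qbinomPoly_expansion (m n : ℕ) (hmn : m ≤ n) :
    qbinomPoly m n =
      Polynomial.C (q ^ (-((n : ℤ) * ((n : ℤ) - (m : ℤ))))) *
        ∑ k ∈ Finset.range (n - m + 1),
          Polynomial.C ((-1) ^ (n - m - k) * q ^ ((n - m - k).choose 2) *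
              qchoose (n - m) (n - m - k)) * qbinomPoly (m + k) (m + k) := by
  obtain ⟨d, rfl⟩ := Nat.exists_eq_add_of_le hmn
  have hcoeff : ∀ k ∈ range (d + 1),
      (-1) ^ (d - k) * q ^ ((d - k).choose 2) * qchoose d (d - k) = expansionCoeff d k :=
    fun k hk => by rw [expansionCoeff, qchoose_sub (Nat.lt_succ_iff.1 (mem_range.1 hk))]
  have hpow :
      q ^ (-(((m + d : ℕ) : ℤ) * ((m + d : ℕ) - m : ℤ))) * q ^ ((m + d) * d) = 1 := by
    rw [← zpow_natCast, ← zpow_add₀ q_ne_zero, ← zpow_zero q]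
    push_cast
    ring_nf
  rw [Nat.add_sub_cancel_left, sum_congr rfl fun k hk => by rw [hcoeff k hk],
    ← qpow_mul_qbinomPoly_eq_sum, ← mul_assoc, ← map_mul, hpow, map_one, one_mul]
end

section
/- For k ≥ 0, one has the polynomial identity z·(q(1−(1−q)z); q)_k = (q^2;q)_k · [k,z choose k+1]_q in ℚ(q)[z]. -/
open Finset Polynomial

/-- The polynomial `(q(1-(1-q)z); q)_k` in the variable `z`. -/
noncomputable def pochPoly (k : ℕ) : Polynomial (RatFunc ℚ) :=
  ∏ j ∈ Finset.range k,
    (1 - Polynomial.C q * (1 - Polynomial.C (1 - q) * Polynomial.X) * Polynomial.C q ^ j)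

lemma one_sub_q_ne : (1 : RatFunc ℚ) - q ≠ 0 := by
  rw [sub_ne_zero]
  intro h
  have h2 : algebraMap ℚ[X] (RatFunc ℚ) Polynomial.X = algebraMap ℚ[X] (RatFunc ℚ) 1 := by
    rw [RatFunc.algebraMap_X, map_one]; exact h.symm
  have := RatFunc.algebraMap_injective ℚ h2
  simpa using Polynomial.X_ne_C (1:ℚ) (by simpa using this)

lemma one_sub_q_mul_qint (n : ℕ) : (1 - q) * qint n = 1 - q ^ n := by
  rw [qint, mul_div_assoc', mul_comm, mul_div_assoc, div_self one_sub_q_ne, mul_one,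
    zpow_natCast]

lemma qint_zero : qint 0 = 0 := by simp [qint]

-- qPoch q q² k = (1-q)^k * ∏_{m∈range k} qint (m+2), and qfact (k+1) = ∏_{m∈range k} qint (m+2)
lemma qfact_succ_eq (k : ℕ) : qfact (k + 1) = ∏ m ∈ Finset.range k, qint (m + 2) := by
  rw [qfact, Finset.prod_range_succ']
  have h0 : qint ((0:ℕ) + 1) = 1 := by
    rw [show ((0:ℕ):ℤ) + 1 = ((1:ℕ):ℤ) by norm_num]
    rw [qint, zpow_natCast, pow_one, div_self one_sub_q_ne]
  rw [h0, mul_one]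
  exact Finset.prod_congr rfl fun m _ => by congr 1

lemma qPoch_eq (k : ℕ) : qPoch q (q ^ 2) k = (1 - q) ^ k * qfact (k + 1) := by
  rw [qPoch, qfact_succ_eq]
  have : ∀ j ∈ Finset.range k, (1 - q ^ 2 * q ^ j) = (1 - q) * qint ((j:ℤ) + 2) := by
    intro j _
    rw [show ((j:ℤ) + 2) = (((j + 2 : ℕ)) : ℤ) by push_cast; ring,
      one_sub_q_mul_qint (j + 2), pow_add, pow_two]
    ring
  rw [Finset.prod_congr rfl this, Finset.prod_mul_distrib, Finset.prod_const,
    Finset.card_range]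

lemma q_pow_ne_one (n : ℕ) (hn : n ≠ 0) : q ^ n ≠ 1 := by
  intro h
  have h2 : algebraMap ℚ[X] (RatFunc ℚ) (Polynomial.X ^ n) = algebraMap ℚ[X] (RatFunc ℚ) 1 := by
    rw [map_pow, RatFunc.algebraMap_X, map_one]; exact h
  have := RatFunc.algebraMap_injective ℚ h2
  have := congrArg Polynomial.natDegree this
  simp [Polynomial.natDegree_X_pow] at this
  exact hn this

lemma qint_ne_zero (n : ℕ) (hn : n ≠ 0) : qint n ≠ 0 := by
  rw [qint, zpow_natCast]
  exact div_ne_zero (sub_ne_zero.mpr fun h => q_pow_ne_one n hn h.symm) one_sub_q_ne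

lemma qfact_succ_ne (k : ℕ) : qfact (k + 1) ≠ 0 := by
  rw [qfact_succ_eq]
  exact Finset.prod_ne_zero_iff.mpr fun m _ => by
    rw [show ((m:ℤ) + 2) = (((m + 2 : ℕ)) : ℤ) by push_cast; ring]
    exact qint_ne_zero (m + 2) (by omega)

theorem mul_pochPoly_eq_qbinomPoly (k : ℕ) :
    Polynomial.X * pochPoly k = Polynomial.C (qPoch q (q ^ 2) k) * qbinomPoly k (k + 1) := by
  rw [qbinomPoly, pochPoly]
  rw [show ((k:ℤ) - (↑(k+1):ℤ) + 1) = 0 from by push_cast; ring]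
  have hmap : Finset.Icc (0:ℤ) (k:ℤ)
      = (Finset.range (k+1)).map ⟨(Nat.cast : ℕ → ℤ), Nat.cast_injective⟩ := by
    ext x
    simp only [Finset.mem_Icc, Finset.mem_map, Finset.mem_range,
      Function.Embedding.coeFn_mk]
    constructor
    · rintro ⟨h0, h1⟩
      obtain ⟨n, rfl⟩ := Int.eq_ofNat_of_zero_le h0
      exact ⟨n, by omega, rfl⟩
    · rintro ⟨n, hn, rfl⟩
      constructor <;> omega
  rw [hmap, Finset.prod_map]
  simp only [Function.Embedding.coeFn_mk]
  rw [Finset.prod_range_succ']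
  have hg0 : Polynomial.C (qint ((0:ℕ):ℤ)) + Polynomial.C (q ^ (((0:ℕ):ℤ))) * Polynomial.X
      = Polynomial.X := by
    simp [qint_zero]
  rw [hg0]
  have hfac : ∀ j ∈ Finset.range k,
      (1 - Polynomial.C q * (1 - Polynomial.C (1 - q) * Polynomial.X) * Polynomial.C q ^ j)
      = Polynomial.C (1 - q) *
        (Polynomial.C (qint ((j+1:ℕ):ℤ)) + Polynomial.C (q ^ ((j+1:ℕ):ℤ)) * Polynomial.X) := by
    intro j _
    have h1 : (1 - q) * qint ((j+1:ℕ):ℤ) = 1 - q ^ (j+1) := one_sub_q_mul_qint (j+1)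
    have h2 : q ^ (((j+1:ℕ)):ℤ) = q ^ (j+1) := zpow_natCast q (j+1)
    rw [h2]
    have e1 : Polynomial.C (1-q) * (Polynomial.C (qint ((j+1:ℕ):ℤ))
        + Polynomial.C (q^(j+1)) * Polynomial.X)
        = Polynomial.C ((1-q) * qint ((j+1:ℕ):ℤ))
          + Polynomial.C ((1-q) * q^(j+1)) * Polynomial.X := by
      simp only [Polynomial.C_mul]; ring
    rw [e1, h1]
    simp only [Polynomial.C_sub, Polynomial.C_mul, Polynomial.C_pow, Polynomial.C_1, pow_succ]
    ring
  rw [Finset.prod_congr rfl hfac, Finset.prod_mul_distrib, Finset.prod_const, Finset.card_range]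
  have hscal : Polynomial.C (qPoch q (q^2) k) * Polynomial.C (qfact (k+1))⁻¹
      = Polynomial.C (1-q) ^ k := by
    rw [← Polynomial.C_mul, qPoch_eq, mul_assoc, mul_inv_cancel₀ (qfact_succ_ne k), mul_one,
      Polynomial.C_pow]
  calc Polynomial.X * (Polynomial.C (1-q) ^ k *
        ∏ j ∈ Finset.range k, (Polynomial.C (qint ((j+1:ℕ):ℤ))
          + Polynomial.C (q ^ ((j+1:ℕ):ℤ)) * Polynomial.X))
      = (Polynomial.C (qPoch q (q^2) k) * Polynomial.C (qfact (k+1))⁻¹) *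
        ((∏ j ∈ Finset.range k, (Polynomial.C (qint ((j+1:ℕ):ℤ))
          + Polynomial.C (q ^ ((j+1:ℕ):ℤ)) * Polynomial.X)) * Polynomial.X) := by
        rw [hscal]; ring
    _ = _ := by ring
end

section
/- For each nonnegative integer ℓ and n ≥ 0, define ξ_{ℓ,n} := q^{(ℓ+1)n}(−q;q)_n/(−q^{ℓ+2};q)_n. Then the Hankel determinant satisfies det_{0≤i,j≤n}(ξ_{ℓ,i+j}) = (−1)^{binom(n+1,2)} q^{2·binom(n+2,3)+(2ℓ+1)·binom(n+1,2)} · Π_{k=1}^n (q^2;q^2)_k (q^{2ℓ+2};q^2)_k / ((−q^{ℓ+1};q^2)_k (−q^{ℓ+2};q^2)_k (−q^{ℓ+2};q^2)_k (−q^{ℓ+3};q^2)_k). -/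
/-!
Write `X = q^{ℓ+1}`, `A = -q`, `B = -q^{ℓ+2}` and consider the family
`ζ_t(m) = X^m (A q^t; q)_m / (B q^{2t}; q)_m`, so that `ζ_0 = ξ_ℓ`. Subtracting `ρ_i` times row `i`
from row `i + 1` of the Hankel matrix of `ζ_t`, where `ρ_m = ζ_t(m+1) / ζ_t(m)`, clears the first
column, and the remaining minor is `diag(r_t) · hankel(ζ_{t+1}) · diag(c)`: indeed
`ζ_t(i+j+2) - ρ_i ζ_t(i+j+1) = (ρ_{i+j+1} - ρ_i) ζ_t(i+j+1)`, and the numerator of `ρ_{i+j+1} - ρ_i`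
is `(A - B q^t) q^{t+i} (1 - q^{j+1})`. Iterating, the determinant is the product of
`r_t(i) c(i)` over the triangle `t + i < n`. Along the antidiagonal `t + i = n` this product is,
up to sign and a power of `q`, a quotient of q-Pochhammer symbols which is the `k = n + 1` factor
of the formula.
-/

open Finset

/-- The moment sequence `ξ_{ℓ,n}`. -/
noncomputable def xiSeq (ℓ n : ℕ) : RatFunc ℚ :=
  q ^ ((ℓ + 1) * n) * qPoch q (-q) n / qPoch q (-q ^ (ℓ + 2)) n


open Matrix

section Hankel

variable {R : Type*} [CommRing R]

def hankel (a : ℕ → R) (n : ℕ) : Matrix (Fin n) (Fin n) R :=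
  of fun i j => a (i + j)

theorem det_hankel_succ_succ_of_condensation {a b ρ r c : ℕ → R} (h0 : a 0 = 1)
    (hρ : ∀ m, a (m + 1) = ρ m * a m)
    (hstep : ∀ i j, a (i + j + 2) - ρ i * a (i + j + 1) = r i * c j * b (i + j)) (n : ℕ) :
    (hankel a (n + 2)).det = (∏ i ∈ range (n + 1), r i * c i) * (hankel b (n + 1)).det := by
  set N : Matrix (Fin (n + 2)) (Fin (n + 2)) R :=
    of (Fin.cons (fun j => a j) fun i j => a (i + 1 + j) - ρ i * a (i + j)) with hN
  have hN_col : ∀ i : Fin (n + 1), N i.succ 0 = 0 := fun i => by simp [hN, hρ]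
  have hN_minor : N.submatrix Fin.succ Fin.succ =
      diagonal (fun i : Fin (n + 1) => r i) * hankel b (n + 1) *
        diagonal (fun j : Fin (n + 1) => c j) := by
    ext i j
    simp only [hN, submatrix_apply, of_apply, Fin.cons_succ, mul_diagonal, diagonal_mul, hankel,
      Fin.val_succ]
    rw [mul_right_comm, ← hstep]
    ring_nf
  calc (hankel a (n + 2)).det = N.det := by
        refine det_eq_of_forall_row_eq_smul_add_pred (fun i => ρ i) (fun j => by simp [hN, hankel])
          fun i j => ?_
        simp only [hN, hankel, of_apply, Fin.cons_succ, Fin.val_succ, Fin.val_castSucc]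
        ring_nf
    _ = (N.submatrix Fin.succ Fin.succ).det := by
        rw [det_succ_column_zero, Fin.sum_univ_succ]
        simp only [hN_col, mul_zero, zero_mul, sum_const_zero, add_zero, Fin.succAbove_zero]
        simp [hN, h0]
    _ = _ := by
        rw [hN_minor, det_mul, det_mul, det_diagonal, det_diagonal, Fin.prod_univ_eq_prod_range
          (fun i => r i), Fin.prod_univ_eq_prod_range (fun i => c i), prod_mul_distrib]
        ring

theorem det_hankel_of_condensation {a ρ r c : ℕ → ℕ → R} (h0 : ∀ t, a t 0 = 1)
    (hρ : ∀ t m, a t (m + 1) = ρ t m * a t m)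
    (hstep : ∀ t i j, a t (i + j + 2) - ρ t i * a t (i + j + 1) = r t i * c t j * a (t + 1) (i + j))
    (n t : ℕ) :
    (hankel (a t) (n + 1)).det = ∏ s ∈ range n, ∏ i ∈ range (n - s), r (t + s) i * c (t + s) i := by
  induction n generalizing t with
  | zero => simp [hankel, h0]
  | succ n ih =>
    rw [det_hankel_succ_succ_of_condensation (h0 t) (hρ t) (hstep t), ih]
    conv_rhs => rw [prod_range_succ']
    simp only [Nat.add_sub_add_right, Nat.sub_zero, add_zero, ← add_assoc, add_right_comm t 1]
    ring

end Hankel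

theorem prod_range_prod_range_sub_succ {M : Type*} [CommMonoid M] (g : ℕ → ℕ → M) (n : ℕ) :
    ∏ s ∈ range (n + 1), ∏ i ∈ range (n + 1 - s), g s i =
      (∏ s ∈ range n, ∏ i ∈ range (n - s), g s i) * ∏ s ∈ range (n + 1), g s (n - s) := by
  have hrow : ∀ s ∈ range n,
      ∏ i ∈ range (n + 1 - s), g s i = (∏ i ∈ range (n - s), g s i) * g s (n - s) := fun s hs => by
    rw [Nat.sub_add_comm (mem_range.1 hs).le, prod_range_succ]
  rw [prod_range_succ, prod_congr rfl hrow, prod_mul_distrib, prod_range_succ _ n]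
  simp only [Nat.add_sub_cancel_left, Nat.sub_self, prod_range_one]
  rw [mul_assoc]

section QPoch

variable (Q A : RatFunc ℚ)

@[simp] theorem qPoch_zero : qPoch Q A 0 = 1 := prod_range_zero _

theorem qPoch_succ (m : ℕ) : qPoch Q A (m + 1) = qPoch Q A m * (1 - A * Q ^ m) :=
  prod_range_succ _ _

theorem qPoch_succ' (m : ℕ) : qPoch Q A (m + 1) = (1 - A) * qPoch Q (A * Q) m := by
  simp only [qPoch, prod_range_succ', pow_zero, mul_one, pow_succ, mul_assoc, mul_comm Q]
  ring

theorem qPoch_add (m k : ℕ) : qPoch Q A (m + k) = qPoch Q A m * qPoch Q (A * Q ^ m) k := by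
  simp only [qPoch, prod_range_add, mul_assoc, ← pow_add]

theorem qPoch_sq (m : ℕ) : qPoch (Q ^ 2) (A ^ 2) m = qPoch Q A m * qPoch Q (-A) m := by
  simp only [qPoch, ← prod_mul_distrib]
  exact prod_congr rfl fun j _ => by ring

theorem qPoch_two_mul (m : ℕ) :
    qPoch Q A (2 * m) = qPoch (Q ^ 2) A m * qPoch (Q ^ 2) (A * Q) m := by
  induction m with
  | zero => simp
  | succ m ih =>
    simp only [qPoch, prod_range_succ, mul_add_one] at ih ⊢
    rw [ih]
    ring

variable {Q A} in
theorem qPoch_ne_zero (h : ∀ k, 1 - A * Q ^ k ≠ 0) (m : ℕ) : qPoch Q A m ≠ 0 :=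
  prod_ne_zero_iff.2 fun k _ => h k

end QPoch

noncomputable def pochRatio (Q A B X : RatFunc ℚ) (m : ℕ) : RatFunc ℚ :=
  X ^ m * qPoch Q A m / qPoch Q B m

noncomputable def condensationCoeff (Q A B X : RatFunc ℚ) (i : ℕ) : RatFunc ℚ :=
  X ^ 2 * (A - B) * (1 - A) * Q ^ i / ((1 - B) * (1 - B * Q) * (1 - B * Q ^ i))

section PochRatio

variable (Q A B X : RatFunc ℚ)

@[simp] theorem pochRatio_zero : pochRatio Q A B X 0 = 1 := by simp [pochRatio]

theorem pochRatio_succ (m : ℕ) :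
    pochRatio Q A B X (m + 1) = X * (1 - A * Q ^ m) / (1 - B * Q ^ m) * pochRatio Q A B X m := by
  simp only [pochRatio, qPoch_succ, pow_succ]
  rw [div_mul_div_comm]
  ring

variable {Q B}

theorem pochRatio_condensation (hB : ∀ k, 1 - B * Q ^ k ≠ 0) (i j : ℕ) :
    pochRatio Q A B X (i + j + 2) -
        X * (1 - A * Q ^ i) / (1 - B * Q ^ i) * pochRatio Q A B X (i + j + 1) =
      condensationCoeff Q A B X i * (1 - Q ^ (j + 1)) * pochRatio Q (A * Q) (B * Q ^ 2) X (i + j) := by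
  have hB' : ∀ k, 1 - B * Q ^ 2 * Q ^ k ≠ 0 := fun k => by
    simpa only [mul_assoc, ← pow_add] using hB (2 + k)
  have hA2 : qPoch Q A (i + j + 2) =
      (1 - A) * (qPoch Q (A * Q) (i + j) * (1 - A * Q * Q ^ (i + j))) := by
    rw [qPoch_succ', qPoch_succ]
  have hB2 : qPoch Q B (i + j + 2) = (1 - B) * (1 - B * Q) * qPoch Q (B * Q ^ 2) (i + j) := by
    rw [qPoch_succ', qPoch_succ', sq, mul_assoc B, mul_assoc]
  have hB1 : qPoch Q B (i + j + 1) = qPoch Q B (i + j + 2) / (1 - B * Q ^ (i + j + 1)) := by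
    rw [qPoch_succ Q B (i + j + 1), mul_div_cancel_right₀ _ (hB _)]
  have h0 := hB 0
  have h1 := hB 1
  have hi := hB i
  have hm := hB (i + j + 1)
  have hD := qPoch_ne_zero hB' (i + j)
  simp only [condensationCoeff, pochRatio, hB1, hA2, hB2, qPoch_succ' Q A (i + j)]
  simp only [pow_zero, pow_one, mul_one] at h0 h1
  field_simp
  ring

theorem det_hankel_pochRatio (hB : ∀ k, 1 - B * Q ^ k ≠ 0) (n : ℕ) :
    (hankel (pochRatio Q A B X) (n + 1)).det = ∏ s ∈ range n, ∏ i ∈ range (n - s),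
      condensationCoeff Q (A * Q ^ s) (B * Q ^ (2 * s)) X i * (1 - Q ^ (i + 1)) := by
  have hBt : ∀ t k, 1 - B * Q ^ (2 * t) * Q ^ k ≠ 0 := fun t k => by
    simpa only [mul_assoc, ← pow_add] using hB (2 * t + k)
  have hstep : ∀ t i j,
      pochRatio Q (A * Q ^ t) (B * Q ^ (2 * t)) X (i + j + 2) -
          X * (1 - A * Q ^ t * Q ^ i) / (1 - B * Q ^ (2 * t) * Q ^ i) *
            pochRatio Q (A * Q ^ t) (B * Q ^ (2 * t)) X (i + j + 1) =
        condensationCoeff Q (A * Q ^ t) (B * Q ^ (2 * t)) X i * (1 - Q ^ (j + 1)) *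
          pochRatio Q (A * Q ^ (t + 1)) (B * Q ^ (2 * (t + 1))) X (i + j) := fun t i j => by
    rw [pochRatio_condensation _ _ (hBt t), mul_assoc A, ← pow_succ, mul_assoc B, ← pow_add,
      mul_add_one 2 t]
  simpa using det_hankel_of_condensation (fun t => pochRatio_zero _ _ _ _)
    (fun t => pochRatio_succ _ _ _ _) hstep n 0

end PochRatio

theorem one_sub_neg_q_pow_mul_ne_zero (a k : ℕ) : 1 - -q ^ a * q ^ k ≠ 0 := by
  have h : 1 - -q ^ a * q ^ k =
      algebraMap (Polynomial ℚ) (RatFunc ℚ) (1 + Polynomial.X ^ (a + k)) := by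
    simp [q, RatFunc.algebraMap_X, pow_add]
  rw [h, ne_eq, map_eq_zero_iff _ (RatFunc.algebraMap_injective ℚ)]
  intro h0
  simpa using congrArg (Polynomial.eval 1) h0

theorem xiSeq_eq_pochRatio (ℓ : ℕ) : xiSeq ℓ = pochRatio q (-q) (-q ^ (ℓ + 2)) (q ^ (ℓ + 1)) :=
  funext fun m => by rw [xiSeq, pochRatio, pow_mul]

noncomputable def hankelXiFactor (ℓ k : ℕ) : RatFunc ℚ :=
  qPoch (q ^ 2) (q ^ 2) k * qPoch (q ^ 2) (q ^ (2 * ℓ + 2)) k /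
    (qPoch (q ^ 2) (-q ^ (ℓ + 1)) k * qPoch (q ^ 2) (-q ^ (ℓ + 2)) k *
      qPoch (q ^ 2) (-q ^ (ℓ + 2)) k * qPoch (q ^ 2) (-q ^ (ℓ + 3)) k)

theorem hankelXiFactor_eq (ℓ m : ℕ) :
    hankelXiFactor ℓ m = qPoch q q m * qPoch q (-q) m * qPoch q (q ^ (ℓ + 1)) m /
      (qPoch (q ^ 2) (-q ^ (ℓ + 2)) m * qPoch (q ^ 2) (-q ^ (ℓ + 3)) m *
        qPoch q (-q ^ (ℓ + m + 1)) m) := by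
  have hsq : qPoch (q ^ 2) (q ^ (2 * ℓ + 2)) m =
      qPoch q (q ^ (ℓ + 1)) m * qPoch q (-q ^ (ℓ + 1)) m := by
    rw [← qPoch_sq]
    ring_nf
  have hinterleave : qPoch (q ^ 2) (-q ^ (ℓ + 1)) m * qPoch (q ^ 2) (-q ^ (ℓ + 2)) m =
      qPoch q (-q ^ (ℓ + 1)) m * qPoch q (-q ^ (ℓ + m + 1)) m := by
    rw [show -q ^ (ℓ + 2) = -q ^ (ℓ + 1) * q by ring, ← qPoch_two_mul, two_mul, qPoch_add]
    ring_nf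
  have hne : qPoch q (-q ^ (ℓ + 1)) m ≠ 0 := qPoch_ne_zero (one_sub_neg_q_pow_mul_ne_zero _) m
  rw [hankelXiFactor, qPoch_sq, hsq, hinterleave]
  calc _ = qPoch q q m * qPoch q (-q) m * qPoch q (q ^ (ℓ + 1)) m * qPoch q (-q ^ (ℓ + 1)) m /
        (qPoch (q ^ 2) (-q ^ (ℓ + 2)) m * qPoch (q ^ 2) (-q ^ (ℓ + 3)) m *
          qPoch q (-q ^ (ℓ + m + 1)) m * qPoch q (-q ^ (ℓ + 1)) m) := by ring
    _ = _ := mul_div_mul_right _ _ hne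

theorem prod_antidiagonal_condensationCoeff_xi (ℓ n : ℕ) :
    ∏ s ∈ range (n + 1), condensationCoeff q (-q * q ^ s) (-q ^ (ℓ + 2) * q ^ (2 * s))
        (q ^ (ℓ + 1)) (n - s) * (1 - q ^ (n - s + 1)) =
      (-1) ^ (n + 1) * q ^ ((n + 1) * (2 * ℓ + n + 3)) * hankelXiFactor ℓ (n + 1) := by
  have hterm : ∀ s ∈ range (n + 1),
      condensationCoeff q (-q * q ^ s) (-q ^ (ℓ + 2) * q ^ (2 * s)) (q ^ (ℓ + 1)) (n - s) *
          (1 - q ^ (n - s + 1)) =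
        -q ^ (2 * ℓ + n + 3) *
          ((1 - q ^ (ℓ + 1) * q ^ s) * (1 - -q * q ^ s) * (1 - q * q ^ (n - s))) /
          ((1 - -q ^ (ℓ + 2) * (q ^ 2) ^ s) * (1 - -q ^ (ℓ + 3) * (q ^ 2) ^ s) *
            (1 - -q ^ (ℓ + (n + 1) + 1) * q ^ s)) := fun s hs => by
    obtain ⟨i, rfl⟩ := Nat.exists_eq_add_of_le (mem_range_succ_iff.1 hs)
    rw [Nat.add_sub_cancel_left, condensationCoeff]
    ring
  have hreflect : ∏ s ∈ range (n + 1), (1 - q * q ^ (n - s)) = qPoch q q (n + 1) := by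
    simpa [qPoch] using prod_range_reflect (fun j => 1 - q * q ^ j) (n + 1)
  rw [prod_congr rfl hterm, prod_div_distrib]
  simp only [prod_mul_distrib, prod_const, card_range, hreflect]
  rw [hankelXiFactor_eq, neg_pow, ← pow_mul]
  simp only [qPoch]
  ring

theorem prod_triangle_condensationCoeff_xi (ℓ n : ℕ) :
    ∏ s ∈ range n, ∏ i ∈ range (n - s), condensationCoeff q (-q * q ^ s)
        (-q ^ (ℓ + 2) * q ^ (2 * s)) (q ^ (ℓ + 1)) i * (1 - q ^ (i + 1)) =
      (-1) ^ ((n + 1).choose 2) * q ^ (2 * (n + 2).choose 3 + (2 * ℓ + 1) * (n + 1).choose 2) *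
        ∏ k ∈ Icc 1 n, hankelXiFactor ℓ k := by
  induction n with
  | zero => simp
  | succ n ih =>
    have hc2 : (n + 2).choose 2 = (n + 1).choose 2 + (n + 1) := by
      rw [Nat.choose_succ_succ', Nat.choose_one_right, add_comm]
    have hc3 : (n + 3).choose 3 = (n + 2).choose 3 + (n + 2).choose 2 := by
      rw [Nat.choose_succ_succ', add_comm]
    have hgauss : (n + 2) * (n + 1) = (n + 2).choose 2 * 2 := by
      simpa using Nat.add_one_mul_choose_eq (n + 1) 1
    have hexp : 2 * (n + 3).choose 3 + (2 * ℓ + 1) * (n + 2).choose 2 =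
        2 * (n + 2).choose 3 + (2 * ℓ + 1) * (n + 1).choose 2 + (n + 1) * (2 * ℓ + n + 3) := by
      rw [hc3]
      nlinarith [hc2, hgauss]
    rw [prod_range_prod_range_sub_succ, ih, prod_antidiagonal_condensationCoeff_xi,
      prod_Icc_succ_top (by omega), hexp, hc2, pow_add, pow_add]
    ring

theorem hankel_xi (ℓ : ℕ) :
    ∀ n : ℕ,
      Matrix.det (Matrix.of fun i j : Fin (n + 1) => xiSeq ℓ ((i : ℕ) + (j : ℕ))) =
        (-1) ^ ((n + 1).choose 2) *
            q ^ (2 * (n + 2).choose 3 + (2 * ℓ + 1) * (n + 1).choose 2) *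
          ∏ k ∈ Finset.Icc 1 n,
            qPoch (q ^ 2) (q ^ 2) k * qPoch (q ^ 2) (q ^ (2 * ℓ + 2)) k /
              (qPoch (q ^ 2) (-q ^ (ℓ + 1)) k * qPoch (q ^ 2) (-q ^ (ℓ + 2)) k *
                qPoch (q ^ 2) (-q ^ (ℓ + 2)) k * qPoch (q ^ 2) (-q ^ (ℓ + 3)) k) := by
  intro n
  change (hankel (xiSeq ℓ) (n + 1)).det = _
  rw [xiSeq_eq_pochRatio, det_hankel_pochRatio _ _ (one_sub_neg_q_pow_mul_ne_zero _)]
  exact prod_triangle_condensationCoeff_xi ℓ n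
end
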